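/- arXiv:2402.13292 — 4 statements merged into one kernel-verified Lean document; each statement's English description precedes it below -/
import Mathlib

section
/- Let n ≥ 2, let c : Fin n → Fin n → ℝ be a cost matrix, let M : Fin n ≃ Fin n be an assignment of minimum cost, and let r : Fin n ≃ Fin n be an arbitrary ordering of the robots, with cells S_k = { σ : Fin n ≃ Fin n | σ (r j) = M (r j) for every j < k, and σ (r k) ≠ M (r k) } for k : Fin n. Suppose that for every k such that S_k is nonempty, θ_k ∈ S_k is an element of S_k of minimum cost within S_k. Then some cell is nonempty, and any θ of minimum cost among the chosen elements { θ_k | S_k nonempty } is a next best assignment: cost(θ) ≤ cost(σ) for every assignment σ with σ ≠ M. -/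
/-- Correctness of the next-best-assignment computation: given a minimum-cost
assignment `M` and an arbitrary ordering `r` of the robots with cells `S k`,
if `θk k` is a minimum-cost element of each nonempty cell, then some cell is
nonempty, and any minimum-cost element among the chosen `θk k` is a next best
assignment: its cost is at most the cost of every assignment `σ ≠ M`. -/
theorem next_best_assignment (n : ℕ) (hn : 2 ≤ n) (c : Fin n → Fin n → ℝ)
    (M r : Fin n ≃ Fin n)
    (hM : ∀ σ : Fin n ≃ Fin n, ∑ i, c i (M i) ≤ ∑ i, c i (σ i))
    (S : Fin n → Set (Fin n ≃ Fin n))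
    (hS : ∀ k, S k = {σ : Fin n ≃ Fin n |
      (∀ j, j < k → σ (r j) = M (r j)) ∧ σ (r k) ≠ M (r k)})
    (θk : Fin n → Fin n ≃ Fin n)
    (hθk : ∀ k, (S k).Nonempty →
      θk k ∈ S k ∧ ∀ σ ∈ S k, ∑ i, c i (θk k i) ≤ ∑ i, c i (σ i)) :
    (∃ k, (S k).Nonempty) ∧
    ∀ θ : Fin n ≃ Fin n,
      (∃ k, (S k).Nonempty ∧ θ = θk k) →
      (∀ k, (S k).Nonempty → ∑ i, c i (θ i) ≤ ∑ i, c i (θk k i)) →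
      ∀ σ : Fin n ≃ Fin n, σ ≠ M → ∑ i, c i (θ i) ≤ ∑ i, c i (σ i) := by
  -- every σ ≠ M lies in some cell
  have key : ∀ σ : Fin n ≃ Fin n, σ ≠ M → ∃ k, σ ∈ S k := by
    intro σ hσ
    have hex : ∃ k : Fin n, σ (r k) ≠ M (r k) := by
      by_contra h
      push_neg at h
      apply hσ
      apply Equiv.ext
      intro i
      have := h (r.symm i)
      simpa using this
    set T : Finset (Fin n) := Finset.univ.filter (fun k => σ (r k) ≠ M (r k)) with hT
    have hTne : T.Nonempty := by
      obtain ⟨k, hk⟩ := hex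
      exact ⟨k, by simp [hT, hk]⟩
    refine ⟨T.min' hTne, ?_⟩
    rw [hS]
    constructor
    · intro j hj
      by_contra hne
      have hjT : j ∈ T := by simp [hT, hne]
      exact absurd (T.min'_le j hjT) (not_le.mpr hj)
    · have : T.min' hTne ∈ T := T.min'_mem hTne
      simpa [hT] using this
  constructor
  · -- some cell is nonempty: build σ ≠ M
    have h0 : (⟨0, by omega⟩ : Fin n) ≠ (⟨1, by omega⟩ : Fin n) := by
      intro h; simpa using congrArg Fin.val h
    set σ : Fin n ≃ Fin n := M.trans (Equiv.swap ⟨0, by omega⟩ ⟨1, by omega⟩) with hσdef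
    have hσM : σ ≠ M := by
      intro h
      have : σ (M.symm ⟨0, by omega⟩) = M (M.symm ⟨0, by omega⟩) := by rw [h]
      simp [hσdef, Equiv.swap_apply_left] at this
    obtain ⟨k, hk⟩ := key σ hσM
    exact ⟨k, σ, hk⟩
  · rintro θ ⟨k₀, hk₀, rfl⟩ hmin σ hσ
    obtain ⟨k, hk⟩ := key σ hσ
    have hne : (S k).Nonempty := ⟨σ, hk⟩
    calc ∑ i, c i (θk k₀ i) ≤ ∑ i, c i (θk k i) := hmin k hne
      _ ≤ ∑ i, c i (σ i) := (hθk k hne).2 σ hk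
end

section
/- Let n ∈ ℕ, let c : Fin n → Fin n → ℝ≥0∞ be a cost matrix, let M : Fin n ≃ Fin n be an assignment, let r : Fin n ≃ Fin n be an ordering of the robots, and fix k : Fin n with cell S_k = { σ : Fin n ≃ Fin n | σ (r j) = M (r j) for every j < k, and σ (r k) ≠ M (r k) } nonempty. Define the modified cost matrix c′ by c′ i g = c i g for all (i,g) except c′ (r k) (M (r k)) = ∞ (omitting the edge (r k, M (r k))). Then the minimum of the c-cost over S_k equals the minimum of the c′-cost over the set { σ : Fin n ≃ Fin n | σ (r j) = M (r j) for every j < k } (the assignments respecting the include set { (r j, M (r j)) | j < k }). -/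
open ENNReal

def omitEdge {ι κ : Type*} [DecidableEq ι] [DecidableEq κ]
    (c : ι → κ → ℝ≥0∞) (a : ι) (b : κ) : ι → κ → ℝ≥0∞ :=
  fun i g => if i = a ∧ g = b then ⊤ else c i g

section OmitEdge

variable {ι κ : Type*} [Fintype ι] [DecidableEq ι] [DecidableEq κ]
  (c : ι → κ → ℝ≥0∞) (a : ι) (b : κ)

theorem sum_omitEdge_of_ne {σ : ι ≃ κ} (h : σ a ≠ b) :
    ∑ i, omitEdge c a b i (σ i) = ∑ i, c i (σ i) := by
  refine Finset.sum_congr rfl fun i _ => if_neg ?_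
  rintro ⟨rfl, hi⟩
  exact h hi

theorem sum_omitEdge_of_eq {σ : ι ≃ κ} (h : σ a = b) :
    ∑ i, omitEdge c a b i (σ i) = ⊤ := by
  refine eq_top_iff.2 (le_trans ?_ (Finset.single_le_sum
    (f := fun i => omitEdge c a b i (σ i)) (fun _ _ => zero_le) (Finset.mem_univ a)))
  simp [omitEdge, h]

theorem iInf_sum_omitEdge (P : (ι ≃ κ) → Prop) :
    (⨅ σ ∈ {σ : ι ≃ κ | P σ ∧ σ a ≠ b}, ∑ i, c i (σ i)) =
      ⨅ σ ∈ {σ : ι ≃ κ | P σ}, ∑ i, omitEdge c a b i (σ i) := by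
  apply le_antisymm
  · refine le_iInf₂ fun σ hσ => ?_
    by_cases h : σ a = b
    · simp [sum_omitEdge_of_eq c a b h]
    · rw [sum_omitEdge_of_ne c a b h]
      exact iInf₂_le σ ⟨hσ, h⟩
  · refine le_iInf₂ fun σ hσ => ?_
    rw [← sum_omitEdge_of_ne c a b hσ.2]
    exact iInf₂_le σ hσ.1

end OmitEdge

theorem omit_edge_min_eq_general (n : ℕ) (c : Fin n → Fin n → ℝ≥0∞)
    (M r : Fin n ≃ Fin n) (k : Fin n)
    (c' : Fin n → Fin n → ℝ≥0∞)
    (hc' : ∀ i g, c' i g = if i = r k ∧ g = M (r k) then ⊤ else c i g) :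
    (⨅ σ ∈ {σ : Fin n ≃ Fin n |
        (∀ j, j < k → σ (r j) = M (r j)) ∧ σ (r k) ≠ M (r k)},
      ∑ i, c i (σ i)) =
    (⨅ σ ∈ {σ : Fin n ≃ Fin n | ∀ j, j < k → σ (r j) = M (r j)},
      ∑ i, c' i (σ i)) := by
  obtain rfl : c' = omitEdge c (r k) (M (r k)) := funext₂ hc'
  exact iInf_sum_omitEdge c (r k) (M (r k)) fun σ => ∀ j, j < k → σ (r j) = M (r j)

/-- Minimizing the cost over the cell
`S k = {σ | σ (r j) = M (r j) for all j < k, and σ (r k) ≠ M (r k)}`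
amounts to minimizing, over the assignments that respect the include set
`{(r j, M (r j)) | j < k}`, the modified cost matrix `c'` obtained from `c`
by setting the cost of the omitted edge `(r k, M (r k))` to `∞`. -/
theorem omit_edge_min_eq (n : ℕ) (c : Fin n → Fin n → ℝ≥0∞)
    (M r : Fin n ≃ Fin n) (k : Fin n)
    (hne : ({σ : Fin n ≃ Fin n |
      (∀ j, j < k → σ (r j) = M (r j)) ∧ σ (r k) ≠ M (r k)}).Nonempty)
    (c' : Fin n → Fin n → ℝ≥0∞)
    (hc' : ∀ i g, c' i g = if i = r k ∧ g = M (r k) then ⊤ else c i g) :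
    (⨅ σ ∈ {σ : Fin n ≃ Fin n |
        (∀ j, j < k → σ (r j) = M (r j)) ∧ σ (r k) ≠ M (r k)},
      ∑ i, c i (σ i)) =
    (⨅ σ ∈ {σ : Fin n ≃ Fin n | ∀ j, j < k → σ (r j) = M (r j)},
      ∑ i, c' i (σ i)) :=
  omit_edge_min_eq_general n c M r k c' hc'
end

section
/- Let n ∈ ℕ, let h, c : Fin n → Fin n → ℝ with h i g ≤ c i g for all robot–goal pairs (h is an admissible heuristic cost, c is the actual cost), let A ⊆ Fin n × Fin n be the set of pairs whose actual cost has been computed, and define the mixed cost matrix m by m i g = c i g if (i,g) ∈ A and m i g = h i g otherwise. Let I, O ⊆ Fin n × Fin n be an include set and an omit set, and call an assignment σ feasible if σ i = g for every (i,g) ∈ I and σ i ≠ g for every (i,g) ∈ O. If a feasible assignment σ* minimizes the m-cost ∑ i, m i (σ* i) among all feasible assignments, and (i, σ* i) ∈ A for every robot i, then σ* also minimizes the actual cost ∑ i, c i (σ* i) among all feasible assignments. -/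
/-- Heuristic distance-based assignment computation is sound: if `h ≤ c`
pointwise, `m` is the mixed cost matrix (actual cost on the computed pairs `A`,
heuristic cost elsewhere), and a feasible assignment `σ*` (w.r.t. an include
set `I` and an omit set `O`) minimizes the `m`-cost among feasible assignments
while all its own pairs lie in `A`, then `σ*` also minimizes the actual
`c`-cost among feasible assignments. -/
theorem heuristic_assignment_sound (n : ℕ) (h c : Fin n → Fin n → ℝ)
    (hhc : ∀ i g, h i g ≤ c i g)
    (A : Set (Fin n × Fin n)) [DecidablePred (· ∈ A)]
    (m : Fin n → Fin n → ℝ)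
    (hm : ∀ i g, m i g = if (i, g) ∈ A then c i g else h i g)
    (I O : Set (Fin n × Fin n))
    (feasible : (Fin n ≃ Fin n) → Prop)
    (hfeas : ∀ σ : Fin n ≃ Fin n,
      feasible σ ↔ (∀ p ∈ I, σ p.1 = p.2) ∧ (∀ p ∈ O, σ p.1 ≠ p.2))
    (σs : Fin n ≃ Fin n) (hσsfeas : feasible σs)
    (hmin : ∀ σ : Fin n ≃ Fin n, feasible σ → ∑ i, m i (σs i) ≤ ∑ i, m i (σ i))
    (hA : ∀ i : Fin n, (i, σs i) ∈ A) :
    ∀ σ : Fin n ≃ Fin n, feasible σ → ∑ i, c i (σs i) ≤ ∑ i, c i (σ i) := by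
  intro σ hσ
  have h1 : ∑ i, c i (σs i) = ∑ i, m i (σs i) := by
    refine Finset.sum_congr rfl fun i _ => ?_
    rw [hm, if_pos (hA i)]
  have h2 : ∑ i, m i (σ i) ≤ ∑ i, c i (σ i) := by
    refine Finset.sum_le_sum fun i _ => ?_
    rw [hm]
    split <;> [exact le_refl _; exact hhc _ _]
  calc ∑ i, c i (σs i) = ∑ i, m i (σs i) := h1
    _ ≤ ∑ i, m i (σ i) := hmin σ hσ
    _ ≤ ∑ i, c i (σ i) := h2
end

section
/- Let V be a finite type, G : SimpleGraph V, and consider n robots with starts s : Fin n → V and goals f : Fin n → V. Let J ⊆ Fin n be a set of robots and μ an injective map assigning a goal index to each robot in J. Suppose L ∈ ℕ is such that every collision-free family of timed paths (p j) for j ∈ J, where p j is a timed path of cost T j from s j to f (μ j) and no two paths in the family have a vertex or edge conflict, satisfies ∑_{j ∈ J} T j ≥ L. Then for every assignment σ : Fin n ≃ Fin n with σ j = μ j for all j ∈ J, every collision-free solution for σ has total cost at least L + ∑_{i ∉ J} G.dist (s i) (f (σ i)). -/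
/-- A timed path of cost `T` from `u` to `v` in the graph `G`. -/
def TimedPath {V : Type*} (G : SimpleGraph V) (T : ℕ) (u v : V)
    (p : ℕ → V) : Prop :=
  p 0 = u ∧ (∀ τ, T ≤ τ → p τ = v) ∧
    ∀ τ, p (τ + 1) = p τ ∨ G.Adj (p τ) (p (τ + 1))

/-- Two timed paths have a vertex conflict if they occupy the same vertex at
the same time. -/
def VertexConflict {V : Type*} (p q : ℕ → V) : Prop := ∃ τ, p τ = q τ

/-- Two timed paths have an edge conflict if they swap positions in one
timestep. -/
def EdgeConflict {V : Type*} (p q : ℕ → V) : Prop :=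
  ∃ τ, p τ = q (τ + 1) ∧ p (τ + 1) = q τ


lemma timed_dist {V : Type*} {G : SimpleGraph V} {T : ℕ} {u v : V} {p : ℕ → V}
    (h : TimedPath G T u v p) : G.dist u v ≤ T := by
  obtain ⟨h0, hT, hstep⟩ := h
  have key : ∀ τ, ∃ w : G.Walk (p 0) (p τ), w.length ≤ τ := by
    intro τ
    induction τ with
    | zero => exact ⟨SimpleGraph.Walk.nil, le_refl 0⟩
    | succ τ ih =>
      obtain ⟨w, hw⟩ := ih
      rcases hstep τ with h1 | h2
      · exact ⟨w.copy rfl h1.symm, by rw [SimpleGraph.Walk.length_copy]; omega⟩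
      · exact ⟨w.concat h2, by simpa using Nat.succ_le_succ hw⟩
  obtain ⟨w, hw⟩ := key T
  calc G.dist u v = G.dist (p 0) (p T) := by rw [h0, hT T le_rfl]
    _ ≤ w.length := SimpleGraph.dist_le w
    _ ≤ T := hw
/-- A cost escalation certified by a set of conflicting robot–goal pairs
carries over to every assignment containing the same robot–goal pairs:
if every collision-free family of timed paths taking each robot `j ∈ J` to its
goal `f (μ j)` has total cost at least `L`, then every collision-free solution
for any assignment `σ` agreeing with `μ` on `J` has total cost at least
`L + ∑ i ∉ J, G.dist (s i) (f (σ i))`. -/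
theorem conflict_cost_escalation {V : Type*} [Fintype V] (G : SimpleGraph V)
    (n : ℕ) (s f : Fin n → V) (J : Finset (Fin n)) (μ : Fin n → Fin n)
    (hμ : Set.InjOn μ ↑J) (L : ℕ)
    (hL : ∀ (p : Fin n → ℕ → V) (T : Fin n → ℕ),
      (∀ j ∈ J, TimedPath G (T j) (s j) (f (μ j)) (p j)) →
      (∀ j ∈ J, ∀ j' ∈ J, j ≠ j' →
        ¬ VertexConflict (p j) (p j') ∧ ¬ EdgeConflict (p j) (p j')) →
      L ≤ ∑ j ∈ J, T j) :
    ∀ σ : Fin n ≃ Fin n, (∀ j ∈ J, σ j = μ j) →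
      ∀ (p : Fin n → ℕ → V) (T : Fin n → ℕ),
        (∀ i, TimedPath G (T i) (s i) (f (σ i)) (p i)) →
        (∀ i i' : Fin n, i ≠ i' →
          ¬ VertexConflict (p i) (p i') ∧ ¬ EdgeConflict (p i) (p i')) →
        L + ∑ i ∈ Jᶜ, G.dist (s i) (f (σ i)) ≤ ∑ i, T i := by
  intro σ hσ p T hp hc
  have h1 : L ≤ ∑ j ∈ J, T j := by
    apply hL p T
    · intro j hj; rw [← hσ j hj]; exact hp j
    · intro j _ j' _ hjj'; exact hc j j' hjj'
  have h2 : ∀ i ∈ Jᶜ, G.dist (s i) (f (σ i)) ≤ T i := fun i _ => timed_dist (hp i)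
  calc L + ∑ i ∈ Jᶜ, G.dist (s i) (f (σ i))
      ≤ (∑ j ∈ J, T j) + ∑ i ∈ Jᶜ, T i := add_le_add h1 (Finset.sum_le_sum h2)
    _ = ∑ i, T i := Finset.sum_add_sum_compl J T
end
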